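/- The Lie algebra 𝔢 of polynomial vector fields on ℝ⁴ preserving the Engel distribution is solvable, and 𝔢/[𝔢,𝔢] is 2-dimensional, spanned by the images of E = x₁∂₁ + x₂∂₂ + 2x₃∂₃ + 3x₄∂₄ and H = x₁∂₁ − x₂∂₂ + x₄∂₄. -/

import Mathlib

abbrev Pt : Type := Fin 4 → ℝ
abbrev VF : Type := Pt → Pt

/-- Lie bracket of vector fields on ℝ⁴: `[X,Y] = DY·X − DX·Y`. -/
noncomputable def vb (X Y : VF) : VF :=
  fun p => fderiv ℝ Y p (X p) - fderiv ℝ X p (Y p)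

noncomputable def d1 : VF := fun _ => ![1, 0, 0, 0]
noncomputable def d4 : VF := fun _ => ![0, 0, 0, 1]
/-- D₃ = ∂₃ + x₁∂₄. -/
noncomputable def D3f : VF := fun p => ![0, 0, 1, p 0]
/-- E = x₁∂₁ + x₂∂₂ + 2x₃∂₃ + 3x₄∂₄. -/
noncomputable def Efld : VF := fun p => ![p 0, p 1, 2 * p 2, 3 * p 3]
/-- H = x₁∂₁ − x₂∂₂ + x₄∂₄. -/
noncomputable def Hfld : VF := fun p => ![p 0, -p 1, 0, p 3]
/-- `Xf k` is the field X_{k−1} = x₁^k ∂₂ + x₁^{k+1}/(k+1) ∂₃ + x₁^{k+2}/(k+2) ∂₄,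
so `Xf k` for `k : ℕ` runs through X_n, n ≥ −1. -/
noncomputable def Xf (k : ℕ) : VF :=
  fun p => ![0, p 0 ^ k, p 0 ^ (k + 1) / (k + 1), p 0 ^ (k + 2) / (k + 2)]

/-- The Engel symmetry algebra 𝔢, as the span of its weight basis. -/
noncomputable def engelAlg : Submodule ℝ VF :=
  Submodule.span ℝ (({d4, D3f, d1, Efld, Hfld} : Set VF) ∪ Set.range Xf)

/-- Span of all brackets between two subspaces of vector fields. -/
noncomputable def brSpan (A B : Submodule ℝ VF) : Submodule ℝ VF :=
  Submodule.span ℝ {Z | ∃ X ∈ A, ∃ Y ∈ B, Z = vb X Y}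

/-- The derived series of 𝔢. -/
noncomputable def derSeries : ℕ → Submodule ℝ VF
  | 0 => engelAlg
  | n + 1 => brSpan (derSeries n) (derSeries n)

lemma line_deriv (Y : VF) (p w : Pt) (hY : DifferentiableAt ℝ Y p) :
    HasDerivAt (fun t : ℝ => Y (p + t • w)) (fderiv ℝ Y p w) 0 := by
  have hc : HasDerivAt (fun t : ℝ => p + t • w) w 0 := by
    simpa using ((hasDerivAt_id (0:ℝ)).smul_const w).const_add p
  have hfd : HasFDerivAt Y (fderiv ℝ Y p) ((fun t : ℝ => p + t • w) 0) := by
    simpa using hY.hasFDerivAt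
  exact hfd.comp_hasDerivAt (0:ℝ) hc

/-- directional derivative vanishes in directions with zero first coordinate,
for fields depending only on the first coordinate -/
lemma fderiv_dep_zero {Y : VF} (hdep : ∀ p q : Pt, p 0 = q 0 → Y p = Y q)
    (p : Pt) {w : Pt} (hw : w 0 = 0) : fderiv ℝ Y p w = 0 := by
  by_cases hY : DifferentiableAt ℝ Y p
  · have h1 := line_deriv Y p w hY
    have h2 : (fun t : ℝ => Y (p + t • w)) = fun _ => Y p := by
      funext t
      exact hdep _ _ (by simp [hw])
    rw [h2] at h1
    exact h1.unique (hasDerivAt_const _ _)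
  · rw [fderiv_zero_of_not_differentiableAt hY]; rfl

noncomputable def e0 : Pt := ![1, 0, 0, 0]

lemma fderiv_dep_eq {Y : VF} (hdep : ∀ p q : Pt, p 0 = q 0 → Y p = Y q)
    (hY : Differentiable ℝ Y) {p q : Pt} (h0 : p 0 = q 0) :
    fderiv ℝ Y p = fderiv ℝ Y q := by
  have he0 : fderiv ℝ Y p e0 = fderiv ℝ Y q e0 := by
    have h1 := line_deriv Y p e0 (hY p)
    have h2 := line_deriv Y q e0 (hY q)
    have h3 : (fun t : ℝ => Y (p + t • e0)) = (fun t : ℝ => Y (q + t • e0)) := by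
      funext t
      refine hdep _ _ ?_
      show p 0 + t * e0 0 = q 0 + t * e0 0
      rw [h0]
    rw [h3] at h1
    exact h1.unique h2
  refine ContinuousLinearMap.ext fun w => ?_
  have hw : (w - w 0 • e0) 0 = 0 := by
    show w 0 - w 0 * e0 0 = 0
    simp [e0]
  have hsplit : w = w 0 • e0 + (w - w 0 • e0) := by abel
  calc fderiv ℝ Y p w = fderiv ℝ Y p (w 0 • e0 + (w - w 0 • e0)) := by rw [← hsplit]
    _ = w 0 • fderiv ℝ Y p e0 + fderiv ℝ Y p (w - w 0 • e0) := by
        rw [map_add, map_smul]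
    _ = w 0 • fderiv ℝ Y q e0 + 0 := by rw [he0, fderiv_dep_zero hdep p hw]
    _ = fderiv ℝ Y q (w 0 • e0 + (w - w 0 • e0)) := by
        rw [map_add, map_smul, fderiv_dep_zero hdep q hw]
    _ = fderiv ℝ Y q w := by rw [← hsplit]

/-- if the first component is constant, the derivative has zero first component -/
lemma fderiv_comp0_zero {Y : VF} (hc : ∀ p q : Pt, Y p 0 = Y q 0)
    {p : Pt} (hY : DifferentiableAt ℝ Y p) (w : Pt) : fderiv ℝ Y p w 0 = 0 := by
  set π : Pt →L[ℝ] ℝ := ContinuousLinearMap.proj 0 with hπ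
  have h1 : HasFDerivAt (fun p => π (Y p)) (π.comp (fderiv ℝ Y p)) p :=
    π.hasFDerivAt.comp p hY.hasFDerivAt
  have h2 : (fun p => π (Y p)) = fun _ => Y 0 0 := by
    funext r; exact hc r 0
  rw [h2] at h1
  have h3 := h1.unique (hasFDerivAt_const _ _)
  have := congrArg (fun L => L w) h3
  have h4 : π (fderiv ℝ Y p w) = 0 := by simpa using this
  exact h4

/-- fields that are smooth, depend only on the first coordinate,
and have constant first component -/
noncomputable def Qset : Submodule ℝ VF where
  carrier := {X | ContDiff ℝ (⊤:ℕ∞) X ∧ (∀ p q : Pt, p 0 = q 0 → X p = X q) ∧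
    (∀ p q : Pt, X p 0 = X q 0)}
  add_mem' := by
    rintro X Y ⟨hX1, hX2, hX3⟩ ⟨hY1, hY2, hY3⟩
    refine ⟨hX1.add hY1, fun p q h => ?_, fun p q => ?_⟩
    · show X p + Y p = X q + Y q
      rw [hX2 p q h, hY2 p q h]
    · show X p 0 + Y p 0 = X q 0 + Y q 0
      rw [hX3 p q, hY3 p q]
  zero_mem' := ⟨contDiff_const, fun _ _ _ => rfl, fun _ _ => rfl⟩
  smul_mem' := by
    rintro c X ⟨hX1, hX2, hX3⟩
    refine ⟨hX1.const_smul c, fun p q h => ?_, fun p q => ?_⟩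
    · show c • X p = c • X q
      rw [hX2 p q h]
    · show c * X p 0 = c * X q 0
      rw [hX3 p q]

lemma Qset_diff {X : VF} (h : X ∈ Qset) : Differentiable ℝ X :=
  h.1.differentiable (by simp)

noncomputable def eL : Pt →L[ℝ] Pt := LinearMap.toContinuousLinearMap
  { toFun := fun p => ![p 0, p 1, 2 * p 2, 3 * p 3]
    map_add' := by
      intro p q; funext i
      fin_cases i <;> simp [Pi.add_apply] <;> ring
    map_smul' := by
      intro c p; funext i
      fin_cases i <;> simp [Pi.smul_apply, smul_eq_mul] <;> ring }

noncomputable def hL : Pt →L[ℝ] Pt := LinearMap.toContinuousLinearMap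
  { toFun := fun p => ![p 0, -p 1, 0, p 3]
    map_add' := by
      intro p q; funext i
      fin_cases i <;> simp [Pi.add_apply] <;> ring
    map_smul' := by
      intro c p; funext i
      fin_cases i <;> simp [Pi.smul_apply, smul_eq_mul] <;> ring }

lemma eL_apply (p : Pt) : eL p = ![p 0, p 1, 2 * p 2, 3 * p 3] := by
  rw [eL, LinearMap.coe_toContinuousLinearMap']; rfl

lemma hL_apply (p : Pt) : hL p = ![p 0, -p 1, 0, p 3] := by
  rw [hL, LinearMap.coe_toContinuousLinearMap']; rfl

lemma eL_hL_comm (v : Pt) : eL (hL v) = hL (eL v) := by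
  funext i
  rw [eL_apply, hL_apply, eL_apply, hL_apply]
  fin_cases i <;> simp

lemma topsucc : (⊤:ℕ∞) + 1 ≤ ((⊤:ℕ∞) : WithTop ℕ∞) := by exact_mod_cast le_top

lemma vb_master {W W' : Pt →L[ℝ] Pt} {F F' : VF} {cW cW' : ℝ}
    (hW0 : ∀ v : Pt, W v 0 = cW * v 0) (hW'0 : ∀ v : Pt, W' v 0 = cW' * v 0)
    (hcomm : ∀ v : Pt, W' (W v) = W (W' v))
    (hF : F ∈ Qset) (hF' : F' ∈ Qset) :
    vb (fun p => W p + F p) (fun p => W' p + F' p) ∈ Qset ∧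
    ∀ p : Pt, vb (fun p => W p + F p) (fun p => W' p + F' p) p 0
      = cW' * F p 0 - cW * F' p 0 := by
  set X : VF := fun p => W p + F p with hXdef
  set Y : VF := fun p => W' p + F' p with hYdef
  have hFd := Qset_diff hF
  have hF'd := Qset_diff hF'
  have hXsm : ContDiff ℝ (⊤:ℕ∞) X := W.contDiff.add hF.1
  have hYsm : ContDiff ℝ (⊤:ℕ∞) Y := W'.contDiff.add hF'.1
  have hfX : ∀ p, fderiv ℝ X p = (W : Pt →L[ℝ] Pt) + fderiv ℝ F p := by
    intro p
    rw [hXdef]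
    rw [fderiv_fun_add (W.differentiableAt) (hFd p), W.fderiv]
  have hfY : ∀ p, fderiv ℝ Y p = (W' : Pt →L[ℝ] Pt) + fderiv ℝ F' p := by
    intro p
    rw [hYdef]
    rw [fderiv_fun_add (W'.differentiableAt) (hF'd p), W'.fderiv]
  have formula : ∀ p, vb X Y p =
      (W' (F p) - W (F' p)) + (fderiv ℝ F' p (X p) - fderiv ℝ F p (Y p)) := by
    intro p
    show fderiv ℝ Y p (X p) - fderiv ℝ X p (Y p) = _
    rw [hfX, hfY]
    have hXp : X p = W p + F p := rfl
    have hYp : Y p = W' p + F' p := rfl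
    rw [ContinuousLinearMap.add_apply, ContinuousLinearMap.add_apply]
    have expand1 : W' (X p) = W (W' p) + W' (F p) := by rw [hXp, map_add, hcomm]
    have expand2 : W (Y p) = W (W' p) + W (F' p) := by rw [hYp, map_add]
    rw [expand1, expand2]
    abel
  -- first-coordinate difference of X at points with equal first coordinate
  have hX0 : ∀ p q : Pt, p 0 = q 0 → (X p - X q) 0 = 0 := by
    intro p q h
    show (W p + F p) 0 - (W q + F q) 0 = 0
    show W p 0 + F p 0 - (W q 0 + F q 0) = 0
    rw [hW0, hW0, h, hF.2.2 p q]
    ring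
  have hY0 : ∀ p q : Pt, p 0 = q 0 → (Y p - Y q) 0 = 0 := by
    intro p q h
    show (W' p + F' p) 0 - (W' q + F' q) 0 = 0
    show W' p 0 + F' p 0 - (W' q 0 + F' q 0) = 0
    rw [hW'0, hW'0, h, hF'.2.2 p q]
    ring
  have hval : ∀ p : Pt, vb X Y p 0 = cW' * F p 0 - cW * F' p 0 := by
    intro p
    rw [formula]
    have h1 : fderiv ℝ F' p (X p) 0 = 0 := fderiv_comp0_zero hF'.2.2 (hF'd p) _
    have h2 : fderiv ℝ F p (Y p) 0 = 0 := fderiv_comp0_zero hF.2.2 (hFd p) _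
    show (W' (F p) - W (F' p)) 0 + (fderiv ℝ F' p (X p) - fderiv ℝ F p (Y p)) 0 = _
    show W' (F p) 0 - W (F' p) 0 + (fderiv ℝ F' p (X p) 0 - fderiv ℝ F p (Y p) 0) = _
    rw [h1, h2, hW0, hW'0]
    ring
  refine ⟨⟨?_, ?_, ?_⟩, hval⟩
  · -- smoothness
    have : vb X Y = fun p =>
        (W' (F p) - W (F' p)) + (fderiv ℝ F' p (X p) - fderiv ℝ F p (Y p)) :=
      funext formula
    rw [this]
    refine ContDiff.add ?_ ?_
    · exact (W'.contDiff.comp hF.1).sub (W.contDiff.comp hF'.1)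
    · exact ((hF'.1.fderiv_right topsucc).clm_apply hXsm).sub
        ((hF.1.fderiv_right topsucc).clm_apply hYsm)
  · -- depends only on first coordinate
    intro p q h
    rw [formula, formula]
    have e1 : F p = F q := hF.2.1 p q h
    have e2 : F' p = F' q := hF'.2.1 p q h
    have e3 : fderiv ℝ F' p = fderiv ℝ F' q := fderiv_dep_eq hF'.2.1 hF'd h
    have e4 : fderiv ℝ F p = fderiv ℝ F q := fderiv_dep_eq hF.2.1 hFd h
    have e5 : fderiv ℝ F' q (X p) = fderiv ℝ F' q (X q) := by
      have := fderiv_dep_zero hF'.2.1 q (hX0 p q h)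
      rw [map_sub] at this
      linear_combination (norm := module) this
    have e6 : fderiv ℝ F q (Y p) = fderiv ℝ F q (Y q) := by
      have := fderiv_dep_zero hF.2.1 q (hY0 p q h)
      rw [map_sub] at this
      linear_combination (norm := module) this
    rw [e1, e2, e3, e4, e5, e6]
  · -- first component constant
    intro p q
    rw [hval p, hval q, hF.2.2 p q, hF'.2.2 p q]


lemma Efld_eq : Efld = ⇑eL := by
  funext p; rw [eL_apply]; rfl

lemma Hfld_eq : Hfld = ⇑hL := by
  funext p; rw [hL_apply]; rfl

lemma fderiv_Efld (p : Pt) : fderiv ℝ Efld p = eL := by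
  rw [Efld_eq]; exact eL.fderiv

lemma fderiv_Hfld (p : Pt) : fderiv ℝ Hfld p = hL := by
  rw [Hfld_eq]; exact hL.fderiv

-- Q-membership of the coordinate-only generators
lemma proj0_contDiff : ContDiff ℝ (⊤:ℕ∞) (fun p : Pt => p 0) :=
  (ContinuousLinearMap.proj (R:=ℝ) (φ := fun _ : Fin 4 => ℝ) 0).contDiff

lemma d4_mem_Q : d4 ∈ Qset :=
  ⟨contDiff_const, fun _ _ _ => rfl, fun _ _ => rfl⟩

lemma d1_mem_Q : d1 ∈ Qset :=
  ⟨contDiff_const, fun _ _ _ => rfl, fun _ _ => rfl⟩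

lemma D3f_mem_Q : D3f ∈ Qset := by
  refine ⟨?_, fun p q h => by simp only [D3f, h], fun p q => rfl⟩
  unfold D3f
  refine contDiff_pi.2 fun i => ?_
  fin_cases i <;> simp <;> first | exact contDiff_const | exact proj0_contDiff

lemma Xf_mem_Q (k : ℕ) : Xf k ∈ Qset := by
  refine ⟨?_, fun p q h => by simp only [Xf, h], fun p q => rfl⟩
  unfold Xf
  refine contDiff_pi.2 fun i => ?_
  fin_cases i <;> simp
  · exact contDiff_const
  · exact proj0_contDiff.pow k
  · exact (proj0_contDiff.pow (k+1)).div_const _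
  · exact (proj0_contDiff.pow (k+2)).div_const _

noncomputable def d3L : Pt →L[ℝ] Pt := LinearMap.toContinuousLinearMap
  { toFun := fun v => ![0, 0, 0, v 0]
    map_add' := by
      intro p q; funext i
      fin_cases i <;> simp [Pi.add_apply]
    map_smul' := by
      intro c p; funext i
      fin_cases i <;> simp [Pi.smul_apply, smul_eq_mul] }

lemma d3L_apply (v : Pt) : d3L v = ![0, 0, 0, v 0] := by
  rw [d3L, LinearMap.coe_toContinuousLinearMap']; rfl

lemma hasFDeriv_D3f (p : Pt) : HasFDerivAt D3f d3L p := by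
  have h : D3f = fun q => ![0, 0, 1, (0:ℝ)] + d3L q := by
    funext q i
    rw [d3L_apply]
    fin_cases i <;> simp [D3f]
  rw [h]
  exact d3L.hasFDerivAt.const_add _

lemma fderiv_D3f (p : Pt) : fderiv ℝ D3f p = d3L := (hasFDeriv_D3f p).fderiv

noncomputable def vkv (k : ℕ) (t : ℝ) : Pt := ![0, k * t ^ (k-1), t ^ k, t ^ (k+1)]

noncomputable def xL (k : ℕ) (t : ℝ) : Pt →L[ℝ] Pt :=
  (ContinuousLinearMap.proj (R:=ℝ) (φ := fun _ : Fin 4 => ℝ) 0).smulRight (vkv k t)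

lemma xL_apply (k : ℕ) (t : ℝ) (w : Pt) : xL k t w = w 0 • vkv k t := rfl

lemma hasFDeriv_Xf (k : ℕ) (p : Pt) : HasFDerivAt (Xf k) (xL k (p 0)) p := by
  rw [hasFDerivAt_pi']
  intro i
  have hproj : HasFDerivAt (fun x : Pt => x 0)
      (ContinuousLinearMap.proj (R:=ℝ) (φ := fun _ : Fin 4 => ℝ) 0) p :=
    ContinuousLinearMap.hasFDerivAt (ContinuousLinearMap.proj (R:=ℝ) (φ := fun _ : Fin 4 => ℝ) 0)
  fin_cases i
  · have h2 : (fun x : Pt => Xf k x 0) = fun _ : Pt => (0:ℝ) := by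
      funext x; simp [Xf]
    have h : HasFDerivAt (fun _ : Pt => (0:ℝ)) (0 : Pt →L[ℝ] ℝ) p := hasFDerivAt_const 0 p
    show HasFDerivAt (fun x : Pt => Xf k x 0)
      ((ContinuousLinearMap.proj (R:=ℝ) (φ := fun _ : Fin 4 => ℝ) (0 : Fin 4)).comp (xL k (p 0))) p
    rw [h2]
    refine h.congr_fderiv ?_
    refine ContinuousLinearMap.ext fun w => ?_
    simp [xL_apply, vkv]
  · have h2 : (fun x : Pt => Xf k x 1) = fun x : Pt => x 0 ^ k := by
      funext x; simp [Xf]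
    have h : HasFDerivAt (fun x : Pt => x 0 ^ k)
        (((k:ℝ) * p 0 ^ (k-1)) • ContinuousLinearMap.proj (R:=ℝ) (φ := fun _ : Fin 4 => ℝ) 0) p :=
      (hasDerivAt_pow k (p 0)).comp_hasFDerivAt p hproj
    show HasFDerivAt (fun x : Pt => Xf k x 1)
      ((ContinuousLinearMap.proj (R:=ℝ) (φ := fun _ : Fin 4 => ℝ) (1 : Fin 4)).comp (xL k (p 0))) p
    rw [h2]
    refine h.congr_fderiv ?_
    refine ContinuousLinearMap.ext fun w => ?_
    simp [xL_apply, vkv, mul_comm]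
  · have h2 : (fun x : Pt => Xf k x 2) = fun x : Pt => x 0 ^ (k+1) / ((k:ℝ)+1) := by
      funext x; simp [Xf]
    have h : HasFDerivAt (fun x : Pt => x 0 ^ (k+1) / ((k:ℝ)+1))
        ((((k:ℝ)+1) * p 0 ^ k / ((k:ℝ)+1)) • ContinuousLinearMap.proj (R:=ℝ) (φ := fun _ : Fin 4 => ℝ) 0) p := by
      have := ((hasDerivAt_pow (k+1) (p 0)).div_const ((k:ℝ)+1)).comp_hasFDerivAt p hproj
      simpa [Function.comp_def] using this
    show HasFDerivAt (fun x : Pt => Xf k x 2)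
      ((ContinuousLinearMap.proj (R:=ℝ) (φ := fun _ : Fin 4 => ℝ) (2 : Fin 4)).comp (xL k (p 0))) p
    rw [h2]
    refine h.congr_fderiv ?_
    refine ContinuousLinearMap.ext fun w => ?_
    have hk : ((k:ℝ)+1) ≠ 0 := by positivity
    rw [ContinuousLinearMap.smul_apply]
    show _ = xL k (p 0) w 2
    rw [xL_apply]
    show ((↑k + 1) * p 0 ^ k / (↑k + 1)) * w 0 = w 0 * vkv k (p 0) 2
    simp [vkv]
    field_simp
  · have h2 : (fun x : Pt => Xf k x 3) = fun x : Pt => x 0 ^ (k+2) / ((k:ℝ)+2) := by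
      funext x; simp [Xf]
    have h : HasFDerivAt (fun x : Pt => x 0 ^ (k+2) / ((k:ℝ)+2))
        ((((k:ℝ)+2) * p 0 ^ (k+1) / ((k:ℝ)+2)) • ContinuousLinearMap.proj (R:=ℝ) (φ := fun _ : Fin 4 => ℝ) 0) p := by
      have := ((hasDerivAt_pow (k+2) (p 0)).div_const ((k:ℝ)+2)).comp_hasFDerivAt p hproj
      simpa [Function.comp_def] using this
    show HasFDerivAt (fun x : Pt => Xf k x 3)
      ((ContinuousLinearMap.proj (R:=ℝ) (φ := fun _ : Fin 4 => ℝ) (3 : Fin 4)).comp (xL k (p 0))) p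
    rw [h2]
    refine h.congr_fderiv ?_
    refine ContinuousLinearMap.ext fun w => ?_
    have hk : ((k:ℝ)+2) ≠ 0 := by positivity
    rw [ContinuousLinearMap.smul_apply]
    show _ = xL k (p 0) w 3
    rw [xL_apply]
    show ((↑k + 2) * p 0 ^ (k+1) / (↑k + 2)) * w 0 = w 0 * vkv k (p 0) 3
    simp [vkv]
    field_simp

lemma fderiv_Xf (k : ℕ) (p : Pt) : fderiv ℝ (Xf k) p = xL k (p 0) :=
  (hasFDeriv_Xf k p).fderiv

lemma fderiv_d4 (p : Pt) : fderiv ℝ d4 p = 0 := by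
  unfold d4; exact fderiv_const_apply _

lemma fderiv_d1 (p : Pt) : fderiv ℝ d1 p = 0 := by
  unfold d1; exact fderiv_const_apply _

lemma vb_d4_H : vb d4 Hfld = d4 := by
  funext p
  show fderiv ℝ Hfld p (d4 p) - fderiv ℝ d4 p (Hfld p) = d4 p
  rw [fderiv_Hfld, fderiv_d4]
  funext i
  rw [ContinuousLinearMap.zero_apply]
  show (hL (d4 p)) i - 0 = d4 p i
  rw [hL_apply]
  show (![d4 p 0, -d4 p 1, 0, d4 p 3] : Pt) i - 0 = d4 p i
  fin_cases i <;> simp [d4]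

lemma vb_d1_E : vb d1 Efld = d1 := by
  funext p
  show fderiv ℝ Efld p (d1 p) - fderiv ℝ d1 p (Efld p) = d1 p
  rw [fderiv_Efld, fderiv_d1]
  funext i
  rw [ContinuousLinearMap.zero_apply]
  show (eL (d1 p)) i - 0 = d1 p i
  rw [eL_apply]
  show (![d1 p 0, d1 p 1, 2 * d1 p 2, 3 * d1 p 3] : Pt) i - 0 = d1 p i
  fin_cases i <;> simp [d1]

lemma vb_D3_E : vb D3f Efld = (2:ℝ) • D3f := by
  funext p
  show fderiv ℝ Efld p (D3f p) - fderiv ℝ D3f p (Efld p) = ((2:ℝ) • D3f) p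
  rw [fderiv_Efld, fderiv_D3f]
  funext i
  show (eL (D3f p)) i - (d3L (Efld p)) i = (2:ℝ) * D3f p i
  rw [eL_apply, d3L_apply]
  fin_cases i <;> simp [D3f, Efld] <;> ring

lemma vb_H_Xf (k : ℕ) : vb Hfld (Xf k) = ((k:ℝ) + 1) • Xf k := by
  funext p
  show fderiv ℝ (Xf k) p (Hfld p) - fderiv ℝ Hfld p (Xf k p) = (((k:ℝ)+1) • Xf k) p
  rw [fderiv_Xf, fderiv_Hfld]
  funext i
  show (xL k (p 0) (Hfld p)) i - (hL (Xf k p)) i = ((k:ℝ)+1) * Xf k p i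
  rw [xL_apply, hL_apply]
  have hH0 : Hfld p 0 = p 0 := rfl
  rw [hH0]
  have hk1 : ((k:ℝ)+1) ≠ 0 := by positivity
  have hk2 : ((k:ℝ)+2) ≠ 0 := by positivity
  fin_cases i
  · simp [vkv, Xf]
  · show p 0 • vkv k (p 0) 1 - (- Xf k p 1) = ((k:ℝ)+1) * Xf k p 1
    simp only [vkv, Xf, smul_eq_mul]
    show p 0 * ((k:ℝ) * p 0 ^ (k-1)) - (-(p 0 ^ k)) = ((k:ℝ)+1) * p 0 ^ k
    cases k with
    | zero => simp
    | succ j =>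
        have : (j+1) - 1 = j := rfl
        rw [this]
        push_cast
        have hp : p 0 * ((↑j + 1) * p 0 ^ j) = (↑j + 1) * p 0 ^ (j+1) := by
          rw [pow_succ]; ring
        rw [hp]; ring
  · show p 0 • vkv k (p 0) 2 - (0:ℝ) = ((k:ℝ)+1) * Xf k p 2
    simp only [vkv, Xf, smul_eq_mul]
    show p 0 * p 0 ^ k - 0 = ((k:ℝ)+1) * (p 0 ^ (k+1) / ((k:ℝ)+1))
    field_simp
    rw [pow_succ]; ring
  · show p 0 • vkv k (p 0) 3 - Xf k p 3 = ((k:ℝ)+1) * Xf k p 3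
    simp only [vkv, Xf, smul_eq_mul]
    show p 0 * p 0 ^ (k+1) - p 0 ^ (k+2) / ((k:ℝ)+2) = ((k:ℝ)+1) * (p 0 ^ (k+2) / ((k:ℝ)+2))
    field_simp
    rw [pow_succ]; ring

lemma mem_engel_d4 : d4 ∈ engelAlg :=
  Submodule.subset_span (Set.mem_union_left _ (by simp))
lemma mem_engel_D3f : D3f ∈ engelAlg :=
  Submodule.subset_span (Set.mem_union_left _ (by simp))
lemma mem_engel_d1 : d1 ∈ engelAlg :=
  Submodule.subset_span (Set.mem_union_left _ (by simp))
lemma mem_engel_E : Efld ∈ engelAlg :=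
  Submodule.subset_span (Set.mem_union_left _ (by simp))
lemma mem_engel_H : Hfld ∈ engelAlg :=
  Submodule.subset_span (Set.mem_union_left _ (by simp))
lemma mem_engel_Xf (k : ℕ) : Xf k ∈ engelAlg :=
  Submodule.subset_span (Set.mem_union_right _ ⟨k, rfl⟩)

lemma vb_mem_brSpan {A B : Submodule ℝ VF} {X Y : VF} (hX : X ∈ A) (hY : Y ∈ B) :
    vb X Y ∈ brSpan A B :=
  Submodule.subset_span ⟨X, hX, Y, hY, rfl⟩

lemma der_one : derSeries 1 = brSpan engelAlg engelAlg := rfl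

lemma engel_decomp : ∀ X ∈ engelAlg, ∃ a b : ℝ, ∃ F ∈ Qset,
    X = a • Efld + b • Hfld + F := by
  intro X hX
  induction hX using Submodule.span_induction with
  | mem x h =>
      rcases h with h | ⟨k, rfl⟩
      · simp only [Set.mem_insert_iff, Set.mem_singleton_iff] at h
        rcases h with rfl | rfl | rfl | rfl | rfl
        · exact ⟨0, 0, d4, d4_mem_Q, by module⟩
        · exact ⟨0, 0, D3f, D3f_mem_Q, by module⟩
        · exact ⟨0, 0, d1, d1_mem_Q, by module⟩
        · exact ⟨1, 0, 0, zero_mem _, by module⟩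
        · exact ⟨0, 1, 0, zero_mem _, by module⟩
      · exact ⟨0, 0, Xf k, Xf_mem_Q k, by module⟩
  | zero => exact ⟨0, 0, 0, zero_mem _, by module⟩
  | add x y hx hy ihx ihy =>
      obtain ⟨a, b, F, hF, rfl⟩ := ihx
      obtain ⟨a', b', F', hF', rfl⟩ := ihy
      exact ⟨a + a', b + b', F + F', add_mem hF hF', by module⟩
  | smul c x hx ihx =>
      obtain ⟨a, b, F, hF, rfl⟩ := ihx
      exact ⟨c * a, c * b, c • F, Submodule.smul_mem _ c hF, by module⟩

lemma eL0 (v : Pt) : eL v 0 = v 0 := by rw [eL_apply]; rfl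
lemma hL0 (v : Pt) : hL v 0 = v 0 := by rw [hL_apply]; rfl

lemma decomp_fun (a b : ℝ) (F : VF) :
    a • Efld + b • Hfld + F = fun p => (a • eL + b • hL) p + F p := by
  funext p
  show a • Efld p + b • Hfld p + F p = (a • eL + b • hL) p + F p
  rw [Efld_eq, Hfld_eq, ContinuousLinearMap.add_apply, ContinuousLinearMap.smul_apply,
    ContinuousLinearMap.smul_apply]

lemma comb0 (a b : ℝ) (v : Pt) : (a • eL + b • hL) v 0 = (a + b) * v 0 := by
  rw [ContinuousLinearMap.add_apply, ContinuousLinearMap.smul_apply,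
    ContinuousLinearMap.smul_apply]
  show a * eL v 0 + b * hL v 0 = _
  rw [eL0, hL0]; ring

lemma comb_comm (a b a' b' : ℝ) (v : Pt) :
    (a' • eL + b' • hL) ((a • eL + b • hL) v) = (a • eL + b • hL) ((a' • eL + b' • hL) v) := by
  simp only [ContinuousLinearMap.add_apply, ContinuousLinearMap.smul_apply, map_add, map_smul,
    eL_hL_comm]
  module

lemma der1_le_Q : derSeries 1 ≤ Qset := by
  rw [der_one, brSpan]
  refine Submodule.span_le.2 ?_
  rintro Z ⟨X, hX, Y, hY, rfl⟩
  obtain ⟨a, b, F, hF, rfl⟩ := engel_decomp X hX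
  obtain ⟨a', b', F', hF', rfl⟩ := engel_decomp Y hY
  rw [decomp_fun a b F, decomp_fun a' b' F']
  exact (vb_master (comb0 a b) (comb0 a' b') (comb_comm a b a' b') hF hF').1

noncomputable def Q0set : Submodule ℝ VF where
  carrier := {X | X ∈ Qset ∧ ∀ p, X p 0 = 0}
  add_mem' := by
    rintro X Y ⟨hX, hX0⟩ ⟨hY, hY0⟩
    refine ⟨add_mem hX hY, fun p => ?_⟩
    show X p 0 + Y p 0 = 0
    rw [hX0, hY0]; ring
  zero_mem' := ⟨zero_mem _, fun _ => rfl⟩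
  smul_mem' := by
    rintro c X ⟨hX, hX0⟩
    refine ⟨Submodule.smul_mem _ c hX, fun p => ?_⟩
    show c * X p 0 = 0
    rw [hX0]; ring

lemma zero_decomp (X : VF) : X = fun p => (0 : Pt →L[ℝ] Pt) p + X p := by
  funext p
  simp

lemma der2_le_Q0 : derSeries 2 ≤ Q0set := by
  show brSpan (derSeries 1) (derSeries 1) ≤ Q0set
  rw [brSpan]
  refine Submodule.span_le.2 ?_
  rintro Z ⟨X, hX, Y, hY, rfl⟩
  have hXQ := der1_le_Q hX
  have hYQ := der1_le_Q hY
  have h0 : ∀ v : Pt, (0 : Pt →L[ℝ] Pt) v 0 = 0 * v 0 := by intro v; simp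
  have hc : ∀ v : Pt, (0 : Pt →L[ℝ] Pt) ((0 : Pt →L[ℝ] Pt) v) = (0 : Pt →L[ℝ] Pt) ((0 : Pt →L[ℝ] Pt) v) := fun _ => rfl
  obtain ⟨hmem, hval⟩ := vb_master h0 h0 hc hXQ hYQ
  rw [← zero_decomp X, ← zero_decomp Y] at hmem hval
  refine ⟨hmem, fun p => ?_⟩
  rw [hval p]
  ring

lemma der3_bot : derSeries 3 = ⊥ := by
  refine le_antisymm ?_ bot_le
  show brSpan (derSeries 2) (derSeries 2) ≤ ⊥
  rw [brSpan]
  refine Submodule.span_le.2 ?_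
  rintro Z ⟨X, hX, Y, hY, rfl⟩
  have hXQ := der2_le_Q0 hX
  have hYQ := der2_le_Q0 hY
  have : vb X Y = 0 := by
    funext p
    show fderiv ℝ Y p (X p) - fderiv ℝ X p (Y p) = 0
    rw [fderiv_dep_zero hYQ.1.2.1 p (hXQ.2 p), fderiv_dep_zero hXQ.1.2.1 p (hYQ.2 p)]
    simp
  rw [this]
  simp [Submodule.zero_mem]

/-- 𝔢 is solvable and 𝔢/[𝔢,𝔢] is 2-dimensional, spanned by the images of E and H. -/
theorem engel_algebra_solvable_and_abelianization :
    (∃ n, derSeries n = ⊥) ∧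
    (∀ X ∈ engelAlg, ∃ a b : ℝ, X - a • Efld - b • Hfld ∈ derSeries 1) ∧
    (∀ a b : ℝ, a • Efld + b • Hfld ∈ derSeries 1 → a = 0 ∧ b = 0) := by
  refine ⟨⟨3, der3_bot⟩, ?_, ?_⟩
  · intro X hX
    induction hX using Submodule.span_induction with
    | mem x h =>
        rcases h with h | ⟨k, rfl⟩
        · simp only [Set.mem_insert_iff, Set.mem_singleton_iff] at h
          rcases h with rfl | rfl | rfl | rfl | rfl
          · refine ⟨0, 0, ?_⟩
            have h1 : d4 - (0:ℝ) • Efld - (0:ℝ) • Hfld = d4 := by module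
            rw [h1, der_one, ← vb_d4_H]
            exact vb_mem_brSpan mem_engel_d4 mem_engel_H
          · refine ⟨0, 0, ?_⟩
            have h1 : D3f - (0:ℝ) • Efld - (0:ℝ) • Hfld = (2⁻¹:ℝ) • ((2:ℝ) • D3f) := by
              rw [smul_smul]; norm_num
            rw [h1, ← vb_D3_E, der_one]
            exact Submodule.smul_mem _ _ (vb_mem_brSpan mem_engel_D3f mem_engel_E)
          · refine ⟨0, 0, ?_⟩
            have h1 : d1 - (0:ℝ) • Efld - (0:ℝ) • Hfld = d1 := by module
            rw [h1, der_one, ← vb_d1_E]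
            exact vb_mem_brSpan mem_engel_d1 mem_engel_E
          · refine ⟨1, 0, ?_⟩
            have h1 : Efld - (1:ℝ) • Efld - (0:ℝ) • Hfld = 0 := by module
            rw [h1]
            exact zero_mem _
          · refine ⟨0, 1, ?_⟩
            have h1 : Hfld - (0:ℝ) • Efld - (1:ℝ) • Hfld = 0 := by module
            rw [h1]
            exact zero_mem _
        · refine ⟨0, 0, ?_⟩
          have hk : ((k:ℝ) + 1) ≠ 0 := by positivity
          have h1 : Xf k - (0:ℝ) • Efld - (0:ℝ) • Hfld
              = ((k:ℝ)+1)⁻¹ • (((k:ℝ)+1) • Xf k) := by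
            rw [smul_smul, inv_mul_cancel₀ hk, one_smul]; module
          rw [h1, ← vb_H_Xf, der_one]
          exact Submodule.smul_mem _ _ (vb_mem_brSpan mem_engel_H (mem_engel_Xf k))
    | zero =>
        refine ⟨0, 0, ?_⟩
        have h1 : (0:VF) - (0:ℝ) • Efld - (0:ℝ) • Hfld = 0 := by module
        rw [h1]
        exact zero_mem _
    | add x y hx hy ihx ihy =>
        obtain ⟨a, b, hm⟩ := ihx
        obtain ⟨a', b', hm'⟩ := ihy
        refine ⟨a + a', b + b', ?_⟩
        have heq : x + y - (a+a') • Efld - (b+b') • Hfld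
            = (x - a • Efld - b • Hfld) + (y - a' • Efld - b' • Hfld) := by module
        rw [heq]
        exact add_mem hm hm'
    | smul c x hx ihx =>
        obtain ⟨a, b, hm⟩ := ihx
        refine ⟨c * a, c * b, ?_⟩
        have heq : c • x - (c*a) • Efld - (c*b) • Hfld = c • (x - a • Efld - b • Hfld) := by
          module
        rw [heq]
        exact Submodule.smul_mem _ c hm
  · intro a b h
    have hQ := der1_le_Q h
    have hdep := hQ.2.1
    have e1 : (a • Efld + b • Hfld) (![0,1,0,0] : Pt) = (a • Efld + b • Hfld) (0 : Pt) :=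
      hdep _ _ (by simp)
    have e2 : (a • Efld + b • Hfld) (![0,0,0,1] : Pt) = (a • Efld + b • Hfld) (0 : Pt) :=
      hdep _ _ (by simp)
    have h1 := congrFun e1 1
    have h2 := congrFun e2 3
    have g1 : a * 1 + b * (-1) = 0 := by
      simpa [Efld, Hfld] using h1
    have g2 : a * 3 + b * 1 = 0 := by
      have h2' : a * (3 * 1) + b * 1 = a * (3 * 0) + b * 0 := by
        simpa [Efld, Hfld] using h2
      simpa using h2'
    constructor <;> linarith
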